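/- Fix integers k > ℓ ≥ 0, set n = k + ℓ + 1, and fix t ∈ (0, π/2). Define f : ℂ² → ℂ^{k+1} by f(z,w) = (√(binom(k,α))·z^{k−α} w^α)_{α=0,…,k}, h : ℂ² → ℂ^{ℓ+1} by h(z,w) = (√(binom(ℓ,α'))·z^{ℓ−α'} w^{α'})_{α'=0,…,ℓ}, and, viewing ℂ^{n+1} = ℂ^{k+1} ⊕ ℂ^{ℓ+1}, set e₀ = (cos t · f, i sin t · h) and e₁ = (i sin t · f, cos t · h). Then: (i) for every (z,w) ∈ S³, ‖e₀(z,w)‖ = 1, ‖e₁(z,w)‖ = 1, and e₀(z,w) is Hermitian-orthogonal to e₁(z,w); and (ii) for every (z,w) ∈ ℂ², De₀(z,w)[(iz, iw)] = i·(k cos²t + ℓ sin²t)·e₀(z,w) + (k − ℓ)·sin t·cos t·e₁(z,w). -/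

import Mathlib

/-!
Both `f` and `h` are instances of the unitary Veronese map `veronese m`, which is complex
homogeneous of degree `m` and satisfies `∑ ‖veronese m (z, w) α‖² = (‖z‖² + ‖w‖²) ^ m` by the
binomial theorem. Homogeneity gives Euler's identity `Df(p)[p] = m • f p` over `ℂ`, so the
Hopf derivative `Df(p)[i p]` is `i m • f p`. With these, (i) and (ii) are identities between
the coefficients `cos t`, `i sin t` using `cos² t + sin² t = 1`.
-/

open Complex ComplexConjugate

section Euler

variable {𝕜 E F : Type*} [NontriviallyNormedField 𝕜] [NormedAddCommGroup E] [NormedSpace 𝕜 E]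
  [NormedAddCommGroup F] [NormedSpace 𝕜 F]

theorem fderiv_apply_self_of_homogeneous {f : E → F} {p : E} {d : ℕ}
    (hf : DifferentiableAt 𝕜 f p) (hhom : ∀ s : 𝕜, f (s • p) = s ^ d • f p) :
    fderiv 𝕜 f p p = (d : 𝕜) • f p := by
  have hline : HasDerivAt (fun s : 𝕜 => f (s • p)) (fderiv 𝕜 f p p) 1 := by
    have hsmul : HasDerivAt (fun s : 𝕜 => s • p) p 1 := by
      simpa using (hasDerivAt_id (1 : 𝕜)).smul_const p
    exact hf.hasFDerivAt.comp_hasDerivAt_of_eq 1 hsmul (one_smul 𝕜 p).symm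
  have hpow : HasDerivAt (fun s : 𝕜 => f (s • p)) ((d : 𝕜) • f p) 1 := by
    simp_rw [hhom]
    simpa using (hasDerivAt_pow d (1 : 𝕜)).smul_const (f p)
  exact hline.unique hpow

end Euler

theorem fderiv_real_I_smul_of_homogeneous {E F : Type*} [NormedAddCommGroup E]
    [NormedSpace ℂ E] [NormedAddCommGroup F] [NormedSpace ℂ F] {f : E → F} {p : E} {d : ℕ}
    (hf : DifferentiableAt ℂ f p) (hhom : ∀ s : ℂ, f (s • p) = s ^ d • f p) :
    fderiv ℝ f p (I • p) = (I * d) • f p := by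
  rw [hf.fderiv_restrictScalars ℝ, ContinuousLinearMap.coe_restrictScalars',
    ContinuousLinearMap.map_smul, fderiv_apply_self_of_homogeneous hf hhom, smul_smul]

theorem sum_norm_sq_smul {ι : Type*} [Fintype ι] (a : ℂ) (x : ι → ℂ) :
    ∑ i, ‖(a • x) i‖ ^ 2 = ‖a‖ ^ 2 * ∑ i, ‖x i‖ ^ 2 := by
  simp only [Pi.smul_apply, smul_eq_mul, norm_mul, mul_pow, Finset.mul_sum]

theorem sum_conj_smul_mul_smul {ι : Type*} [Fintype ι] (a b : ℂ) (x : ι → ℂ) :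
    ∑ i, conj ((a • x) i) * (b • x) i = conj a * b * ((∑ i, ‖x i‖ ^ 2 : ℝ) : ℂ) := by
  simp only [Pi.smul_apply, smul_eq_mul, ofReal_sum, ofReal_pow, Finset.mul_sum]
  refine Finset.sum_congr rfl fun i _ => ?_
  rw [← mul_conj', map_mul]
  ring

noncomputable def veronese (m : ℕ) (p : ℂ × ℂ) : Fin (m + 1) → ℂ :=
  fun α => (Real.sqrt (m.choose (α : ℕ)) : ℂ) * p.1 ^ (m - (α : ℕ)) * p.2 ^ (α : ℕ)

namespace veronese

theorem smul (m : ℕ) (s : ℂ) (p : ℂ × ℂ) : veronese m (s • p) = s ^ m • veronese m p := by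
  funext α
  have hdeg : m - (α : ℕ) + α = m := Nat.sub_add_cancel α.is_le
  simp only [veronese, Prod.smul_fst, Prod.smul_snd, smul_eq_mul, Pi.smul_apply, mul_pow]
  have hsplit : s ^ m = s ^ (m - (α : ℕ)) * s ^ (α : ℕ) := by rw [← pow_add, hdeg]
  rw [hsplit]
  ring

theorem differentiable (m : ℕ) : Differentiable ℂ (veronese m) := by
  unfold veronese
  fun_prop

theorem fderiv_hopf (m : ℕ) (p : ℂ × ℂ) :
    fderiv ℝ (veronese m) p (I • p) = (I * m) • veronese m p :=
  fderiv_real_I_smul_of_homogeneous ((differentiable m) p) fun s => smul m s p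

theorem sum_norm_sq (m : ℕ) (z w : ℂ) :
    ∑ α, ‖veronese m (z, w) α‖ ^ 2 = (‖z‖ ^ 2 + ‖w‖ ^ 2) ^ m := by
  rw [add_comm (‖z‖ ^ 2), add_pow, Finset.sum_range]
  refine Finset.sum_congr rfl fun α _ => ?_
  simp only [veronese, norm_mul, norm_pow, norm_real, Real.norm_eq_abs,
    abs_of_nonneg (Real.sqrt_nonneg _), mul_pow, Real.sq_sqrt (Nat.cast_nonneg _), ← pow_mul]
  ring

theorem fderiv_prodMk_smul_hopf (k ℓ : ℕ) (a b : ℂ) (p : ℂ × ℂ) :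
    fderiv ℝ (fun q => (a • veronese k q, b • veronese ℓ q)) p (I • p) =
      ((a * (I * k)) • veronese k p, (b * (I * ℓ)) • veronese ℓ p) := by
  have hdiff := fun m => (differentiable m p).restrictScalars ℝ
  have hD : HasFDerivAt (fun q => (a • veronese k q, b • veronese ℓ q)) _ p :=
    ((hdiff k).hasFDerivAt.const_smul a).prodMk ((hdiff ℓ).hasFDerivAt.const_smul b)
  simp only [hD.fderiv, ContinuousLinearMap.prod_apply, FunLike.coe_smul, Pi.smul_apply,
    fderiv_hopf, smul_smul]

end veronese

theorem e₀_e₁_frame_and_Hopf_derivative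
    (k ℓ : ℕ)
    (t : ℝ)
    (f : ℂ × ℂ → Fin (k + 1) → ℂ)
    (h : ℂ × ℂ → Fin (ℓ + 1) → ℂ)
    (hf : ∀ p α, f p α =
      (Real.sqrt (k.choose (α : ℕ)) : ℂ) * p.1 ^ (k - (α : ℕ)) * p.2 ^ (α : ℕ))
    (hh : ∀ p α', h p α' =
      (Real.sqrt (ℓ.choose (α' : ℕ)) : ℂ) * p.1 ^ (ℓ - (α' : ℕ)) * p.2 ^ (α' : ℕ))
    (e₀ e₁ : ℂ × ℂ → (Fin (k + 1) → ℂ) × (Fin (ℓ + 1) → ℂ))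
    (he₀ : ∀ p, e₀ p =
      ((Real.cos t : ℂ) • f p, (Complex.I * (Real.sin t : ℂ)) • h p))
    (he₁ : ∀ p, e₁ p =
      ((Complex.I * (Real.sin t : ℂ)) • f p, (Real.cos t : ℂ) • h p)) :
    (∀ z w : ℂ, ‖z‖ ^ 2 + ‖w‖ ^ 2 = 1 →
      (∑ α, ‖(e₀ (z, w)).1 α‖ ^ 2) + (∑ α', ‖(e₀ (z, w)).2 α'‖ ^ 2) = 1 ∧
      (∑ α, ‖(e₁ (z, w)).1 α‖ ^ 2) + (∑ α', ‖(e₁ (z, w)).2 α'‖ ^ 2) = 1 ∧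
      (∑ α, (starRingEnd ℂ) ((e₀ (z, w)).1 α) * (e₁ (z, w)).1 α) +
        (∑ α', (starRingEnd ℂ) ((e₀ (z, w)).2 α') * (e₁ (z, w)).2 α') = 0) ∧
    (∀ p : ℂ × ℂ,
      fderiv ℝ e₀ p (Complex.I * p.1, Complex.I * p.2) =
        (Complex.I * ((k : ℂ) * (Real.cos t : ℂ) ^ 2 +
          (ℓ : ℂ) * (Real.sin t : ℂ) ^ 2)) • e₀ p +
        (((k : ℂ) - (ℓ : ℂ)) * (Real.sin t : ℂ) * (Real.cos t : ℂ)) • e₁ p) := by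
  obtain rfl : f = veronese k := funext fun p => funext (hf p)
  obtain rfl : h = veronese ℓ := funext fun p => funext (hh p)
  obtain rfl := funext he₀
  obtain rfl := funext he₁
  have pyth : (Real.sin t : ℂ) ^ 2 + (Real.cos t : ℂ) ^ 2 = 1 := by
    exact_mod_cast Real.sin_sq_add_cos_sq t
  have hnorm_I_sin : ‖I * (Real.sin t : ℂ)‖ ^ 2 = Real.sin t ^ 2 := by
    rw [norm_mul, norm_I, one_mul, norm_real, Real.norm_eq_abs, sq_abs]
  refine ⟨fun z w hS => ?_, fun p => ?_⟩
  · have hunit (m : ℕ) : ∑ α, ‖veronese m (z, w) α‖ ^ 2 = 1 := by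
      rw [veronese.sum_norm_sq, hS, one_pow]
    simp only [sum_norm_sq_smul, sum_conj_smul_mul_smul, hunit, hnorm_I_sin, norm_real,
      Real.norm_eq_abs, sq_abs, mul_one, ofReal_one, map_mul, conj_ofReal, conj_I]
    refine ⟨by linarith [Real.sin_sq_add_cos_sq t], by linarith [Real.sin_sq_add_cos_sq t], ?_⟩
    ring
  · rw [show (I * p.1, I * p.2) = I • p from rfl, veronese.fderiv_prodMk_smul_hopf]
    simp only [Prod.smul_mk, Prod.mk_add_mk, smul_smul, ← add_smul]
    congr 2
    · linear_combination (-(I * (Real.cos t : ℂ) * k)) * pyth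
    · linear_combination ((Real.sin t : ℂ) * (ℓ - k * (Real.cos t : ℂ) ^ 2 -
        ℓ * (Real.sin t : ℂ) ^ 2)) * I_sq + ((Real.sin t : ℂ) * ℓ) * pyth
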